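/- arXiv:2504.11920 — 2 statements merged into one kernel-verified Lean document; each statement's English description precedes it below -/
import Mathlib

section
/- Let Ω ⊆ ℝ^d be a measurable set and let A : Ω → Matrix (Fin m) (Fin m) ℝ be a measurable matrix-valued function with ‖A(x)‖ ≤ 1/4 for every x ∈ Ω and finite Gagliardo H^{1/2}(Ω) seminorm, where matrices carry a submultiplicative norm (e.g. the operator norm). Then there exists a constant c > 0, independent of A and Ω, such that the function x ↦ (A(x) + I)⁻¹ − I satisfies [(A+I)⁻¹ − I]_{1/2} ≤ c [A]_{1/2}. -/
open MeasureTheory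

/- Matrices carry the `L∞` operator norm, which is submultiplicative. -/
attribute [local instance] Matrix.linftyOpNormedAddCommGroup Matrix.linftyOpNormedRing

lemma aux_inv_norm_le {R : Type*} [NormedRing R] [NormOneClass R] (u c : R)
    (h1 : u * (c + 1) = 1) (hc : ‖c‖ ≤ 1/4) : ‖u‖ ≤ 4/3 := by
  have h2 : u = 1 - u * c := by
    have h1' : u + u * c = 1 := by rw [← h1]; noncomm_ring
    exact eq_sub_of_add_eq h1'
  have h3 : ‖u‖ ≤ 1 + ‖u‖ * ‖c‖ := by
    calc ‖u‖ = ‖(1 : R) - u * c‖ := by rw [← h2]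
      _ ≤ ‖(1 : R)‖ + ‖u * c‖ := norm_sub_le _ _
      _ ≤ 1 + ‖u‖ * ‖c‖ := by rw [norm_one]; exact add_le_add_right (norm_mul_le _ _) 1
  nlinarith [norm_nonneg u, norm_nonneg c]

lemma aux_diff_eq {R : Type*} [Ring R] (u v a b : R)
    (h1 : u * (a + 1) = 1) (h2 : (b + 1) * v = 1) : u - v = u * (b - a) * v := by
  calc u - v = u * ((b+1) * v) - (u * (a+1)) * v := by rw [h1, h2, mul_one, one_mul]
    _ = u * (b - a) * v := by noncomm_ring

lemma matrix_inv_diff_bound {m : ℕ} (a b : Matrix (Fin m) (Fin m) ℝ)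
    (ha : ‖a‖ ≤ 1/4) (hb : ‖b‖ ≤ 1/4) :
    ‖((a+1)⁻¹ - 1) - ((b+1)⁻¹ - 1)‖ ≤ (16/9) * ‖a - b‖ := by
  rcases Nat.eq_zero_or_pos m with rfl | hm
  · have : ((a+1)⁻¹ - 1) - ((b+1)⁻¹ - 1) = 0 := Subsingleton.elim _ _
    rw [this, norm_zero]
    positivity
  haveI : Nonempty (Fin m) := ⟨⟨0, hm⟩⟩
  have ha1 : ‖(-a)‖ < 1 := by rw [norm_neg]; linarith
  have hb1 : ‖(-b)‖ < 1 := by rw [norm_neg]; linarith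
  haveI : HasSummableGeomSeries (Matrix (Fin m) (Fin m) ℝ) :=
    @instHasSummableGeomSeriesOfCompleteSpace _ _
      (by exact (inferInstance : CompleteSpace (Matrix (Fin m) (Fin m) ℝ)))
  set U : (Matrix (Fin m) (Fin m) ℝ)ˣ := Units.oneSub (-a) ha1 with hU
  set V : (Matrix (Fin m) (Fin m) ℝ)ˣ := Units.oneSub (-b) hb1 with hV
  have hUval : (U : Matrix (Fin m) (Fin m) ℝ) = a + 1 := by
    rw [hU, Units.val_oneSub, sub_neg_eq_add, add_comm]
  have hVval : (V : Matrix (Fin m) (Fin m) ℝ) = b + 1 := by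
    rw [hV, Units.val_oneSub, sub_neg_eq_add, add_comm]
  set u : Matrix (Fin m) (Fin m) ℝ := ↑U⁻¹ with hu'
  set v : Matrix (Fin m) (Fin m) ℝ := ↑V⁻¹ with hv'
  have hAinv : (a+1)⁻¹ = u := by
    rw [Matrix.nonsing_inv_eq_ringInverse, ← hUval, Ring.inverse_unit]
  have hBinv : (b+1)⁻¹ = v := by
    rw [Matrix.nonsing_inv_eq_ringInverse, ← hVval, Ring.inverse_unit]
  have h1 : u * (a + 1) = 1 := by rw [hu', ← hUval]; exact U.inv_mul
  have h1' : v * (b + 1) = 1 := by rw [hv', ← hVval]; exact V.inv_mul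
  have h2 : (b + 1) * v = 1 := by rw [hv', ← hVval]; exact V.mul_inv
  have hun : ‖u‖ ≤ 4/3 := aux_inv_norm_le u a h1 ha
  have hvn : ‖v‖ ≤ 4/3 := aux_inv_norm_le v b h1' hb
  have key : u - v = u * (b - a) * v := aux_diff_eq u v a b h1 h2
  have heq : ((a+1)⁻¹ - 1) - ((b+1)⁻¹ - 1) = u - v := by rw [hAinv, hBinv]; abel
  rw [heq, key]
  calc ‖u * (b - a) * v‖ ≤ ‖u * (b - a)‖ * ‖v‖ := norm_mul_le _ _
    _ ≤ (‖u‖ * ‖b - a‖) * ‖v‖ := mul_le_mul_of_nonneg_right (norm_mul_le _ _) (norm_nonneg _)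
    _ ≤ (16/9) * ‖a - b‖ := by
        rw [norm_sub_rev b a]
        have huv : ‖u‖ * ‖v‖ ≤ 16/9 := by nlinarith [norm_nonneg u, norm_nonneg v]
        calc ‖u‖ * ‖a - b‖ * ‖v‖ = (‖u‖ * ‖v‖) * ‖a - b‖ := by ring
          _ ≤ (16/9) * ‖a - b‖ := mul_le_mul_of_nonneg_right huv (norm_nonneg _)

/-- The Gagliardo `H^{1/2}` seminorm of a function on a set `Ω ⊆ ℝ^d`:
`[f]_{1/2} = (∬_{Ω×Ω} ‖f(x)−f(y)‖²/|x−y|^{d+1} dx dy)^{1/2}`. -/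
noncomputable def gagliardoSeminorm (d : ℕ) (Ω : Set (EuclideanSpace ℝ (Fin d)))
    {E : Type*} [NormedAddCommGroup E] (f : EuclideanSpace ℝ (Fin d) → E) : ℝ :=
  Real.sqrt (∫ p in Ω ×ˢ Ω, ‖f p.1 - f p.2‖ ^ 2 / ‖p.1 - p.2‖ ^ (d + 1))

/-- Estimate (2.19c) of Lemma 2.10: there is a constant `c > 0`, independent of `A` and
`Ω`, such that if `‖A(x)‖ ≤ 1/4` for every `x ∈ Ω`, then
`[(A+I)⁻¹ − I]_{1/2} ≤ c [A]_{1/2}`. -/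
theorem inv_one_add_sub_one_gagliardo_bound (d m : ℕ) :
    ∃ c : ℝ, 0 < c ∧
      ∀ (Ω : Set (EuclideanSpace ℝ (Fin d)))
        (A : EuclideanSpace ℝ (Fin d) → Matrix (Fin m) (Fin m) ℝ),
        AEStronglyMeasurable A (volume.restrict Ω) →
        (∀ x ∈ Ω, ‖A x‖ ≤ 1 / 4) →
        IntegrableOn
          (fun p : EuclideanSpace ℝ (Fin d) × EuclideanSpace ℝ (Fin d) =>
            ‖A p.1 - A p.2‖ ^ 2 / ‖p.1 - p.2‖ ^ (d + 1)) (Ω ×ˢ Ω) →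
        gagliardoSeminorm d Ω (fun x => (A x + 1)⁻¹ - 1) ≤ c * gagliardoSeminorm d Ω A := by
  refine ⟨16/9, by norm_num, ?_⟩
  intro Ω A hA hnorm hInt
  set μ := volume.restrict Ω with hμ
  obtain ⟨A₀, hA₀m, hae⟩ := hA
  -- a.e. norm bound for A w.r.t. μ
  have hae0 : μ {x | ¬ A x = A₀ x} = 0 := ae_iff.mp hae
  obtain ⟨N, hsubN, hNm, hN0⟩ := exists_measurable_superset_of_null hae0
  have hBmMeas : MeasurableSet {x | ¬ ‖A₀ x‖ ≤ 1/4} :=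
    (measurableSet_le hA₀m.norm.measurable measurable_const).compl
  have hBm0 : μ {x | ¬ ‖A₀ x‖ ≤ 1/4} = 0 := by
    rw [hμ, Measure.restrict_apply hBmMeas]
    have hsub : {x | ¬ ‖A₀ x‖ ≤ 1/4} ∩ Ω ⊆ N ∩ Ω := by
      rintro x ⟨hx1, hx2⟩
      refine ⟨hsubN ?_, hx2⟩
      intro hAx
      exact hx1 (hAx ▸ hnorm x hx2)
    have hNΩ : volume (N ∩ Ω) = 0 := by
      rw [hμ, Measure.restrict_apply hNm] at hN0; exact hN0
    exact measure_mono_null hsub hNΩ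
  have hbd : ∀ᵐ x ∂μ, ‖A x‖ ≤ 1/4 := by
    have h₀ : ∀ᵐ x ∂μ, ‖A₀ x‖ ≤ 1/4 := by
      rw [ae_iff]; exact hBm0
    filter_upwards [h₀, hae] with x h1 h2
    rw [h2]; exact h1
  -- product measure identification
  have hprod : (volume : Measure (EuclideanSpace ℝ (Fin d) × EuclideanSpace ℝ (Fin d))).restrict
      (Ω ×ˢ Ω) = μ.prod μ := by
    rw [Measure.volume_eq_prod, ← Measure.prod_restrict]
  have hbd1 : ∀ᵐ p ∂ μ.prod μ, ‖A p.1‖ ≤ 1/4 :=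
    Measure.quasiMeasurePreserving_fst.ae hbd
  have hbd2 : ∀ᵐ p ∂ μ.prod μ, ‖A p.2‖ ≤ 1/4 :=
    Measure.quasiMeasurePreserving_snd.ae hbd
  -- pointwise a.e. comparison of integrands
  have hle : ∀ᵐ p ∂ μ.prod μ,
      ‖((A p.1 + 1)⁻¹ - 1) - ((A p.2 + 1)⁻¹ - 1)‖ ^ 2 / ‖p.1 - p.2‖ ^ (d + 1) ≤
        (16/9)^2 * (‖A p.1 - A p.2‖ ^ 2 / ‖p.1 - p.2‖ ^ (d + 1)) := by
    filter_upwards [hbd1, hbd2] with p h1 h2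
    have hkey := matrix_inv_diff_bound (A p.1) (A p.2) h1 h2
    have hnum : ‖((A p.1 + 1)⁻¹ - 1) - ((A p.2 + 1)⁻¹ - 1)‖ ^ 2 ≤
        (16/9)^2 * ‖A p.1 - A p.2‖ ^ 2 := by
      have := pow_le_pow_left₀ (norm_nonneg _) hkey 2
      calc ‖((A p.1 + 1)⁻¹ - 1) - ((A p.2 + 1)⁻¹ - 1)‖ ^ 2
          ≤ (16/9 * ‖A p.1 - A p.2‖) ^ 2 := this
        _ = (16/9)^2 * ‖A p.1 - A p.2‖ ^ 2 := by ring
    rw [mul_div_assoc']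
    exact div_le_div_of_nonneg_right hnum (by positivity)
  -- integral comparison
  have hInt' : Integrable (fun p : EuclideanSpace ℝ (Fin d) × EuclideanSpace ℝ (Fin d) =>
      ‖A p.1 - A p.2‖ ^ 2 / ‖p.1 - p.2‖ ^ (d + 1)) (μ.prod μ) := by
    rw [← hprod]; exact hInt
  have hI : (∫ p, ‖((fun x => (A x + 1)⁻¹ - 1) p.1) - ((fun x => (A x + 1)⁻¹ - 1) p.2)‖ ^ 2 /
        ‖p.1 - p.2‖ ^ (d + 1) ∂(μ.prod μ)) ≤
      (16/9)^2 * ∫ p, ‖A p.1 - A p.2‖ ^ 2 / ‖p.1 - p.2‖ ^ (d + 1) ∂(μ.prod μ) := by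
    refine le_trans (integral_mono_of_nonneg
      (Filter.Eventually.of_forall (fun p => by positivity))
      (hInt'.const_mul ((16/9)^2)) hle) (le_of_eq ?_)
    exact integral_const_mul _ _
  -- conclude with square roots
  rw [gagliardoSeminorm, gagliardoSeminorm, hprod]
  calc Real.sqrt (∫ p, ‖((fun x => (A x + 1)⁻¹ - 1) p.1) - ((fun x => (A x + 1)⁻¹ - 1) p.2)‖ ^ 2 /
        ‖p.1 - p.2‖ ^ (d + 1) ∂(μ.prod μ))
      ≤ Real.sqrt ((16/9)^2 * ∫ p, ‖A p.1 - A p.2‖ ^ 2 / ‖p.1 - p.2‖ ^ (d + 1) ∂(μ.prod μ)) :=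
        Real.sqrt_le_sqrt hI
    _ = 16/9 * Real.sqrt (∫ p, ‖A p.1 - A p.2‖ ^ 2 / ‖p.1 - p.2‖ ^ (d + 1) ∂(μ.prod μ)) := by
        rw [Real.sqrt_mul (by positivity), Real.sqrt_sq (by norm_num)]
end

section
/- Let Ω ⊆ ℝ^d be a measurable set and let A : Ω → Matrix (Fin m) (Fin m) ℝ be a measurable matrix-valued function with ‖A(x)‖ ≤ 1/4 for every x ∈ Ω and finite Gagliardo H^{1/2}(Ω) seminorm, where matrices carry a submultiplicative norm (e.g. the operator norm). Then for every integer n ≥ 1, the pointwise matrix power Aⁿ satisfies [Aⁿ]_{1/2} ≤ (√2)^{1−n} [A]_{1/2}. -/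
open MeasureTheory

/- Matrices carry the `L∞` operator norm, which is submultiplicative. -/
attribute [local instance] Matrix.linftyOpNormedAddCommGroup Matrix.linftyOpNormedRing

/-- norm of a power in a normed ring, bounded by `r^k` for `k ≥ 1`. -/
lemma aux_norm_pow_le {R : Type*} [NormedRing R] {a : R} {r : ℝ} (ha : ‖a‖ ≤ r) :
    ∀ k : ℕ, 1 ≤ k → ‖a ^ k‖ ≤ r ^ k := by
  intro k hk
  induction k with
  | zero => omega
  | succ k ih =>
    rcases Nat.eq_or_lt_of_le hk with h | h
    · obtain rfl : k = 0 := by omega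
      simpa using ha
    · have hk1 : 1 ≤ k := by omega
      calc ‖a ^ (k + 1)‖ = ‖a * a ^ k‖ := by rw [pow_succ']
        _ ≤ ‖a‖ * ‖a ^ k‖ := norm_mul_le _ _
        _ ≤ r * r ^ k := by
            apply mul_le_mul ha (ih hk1) (norm_nonneg _) ((norm_nonneg a).trans ha)
        _ = r ^ (k + 1) := (pow_succ' r k).symm

/-- Telescoping bound: `‖a^n - b^n‖ ≤ n r^(n-1) ‖a - b‖` when `‖a‖, ‖b‖ ≤ r`. -/
lemma aux_pow_sub_pow {R : Type*} [NormedRing R] {a b : R} {r : ℝ}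
    (ha : ‖a‖ ≤ r) (hb : ‖b‖ ≤ r) :
    ∀ k : ℕ, ‖a ^ (k + 1) - b ^ (k + 1)‖ ≤ (k + 1 : ℝ) * r ^ k * ‖a - b‖ := by
  have hr : 0 ≤ r := (norm_nonneg a).trans ha
  intro k
  induction k with
  | zero => simp
  | succ k ih =>
    have key : a ^ (k + 2) - b ^ (k + 2)
        = a ^ (k + 1) * (a - b) + (a ^ (k + 1) - b ^ (k + 1)) * b := by
      simp only [mul_sub, sub_mul, ← pow_succ]
      abel
    calc ‖a ^ (k + 2) - b ^ (k + 2)‖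
        ≤ ‖a ^ (k + 1) * (a - b)‖ + ‖(a ^ (k + 1) - b ^ (k + 1)) * b‖ := by
          rw [key]; exact norm_add_le _ _
      _ ≤ ‖a ^ (k + 1)‖ * ‖a - b‖ + ‖a ^ (k + 1) - b ^ (k + 1)‖ * ‖b‖ :=
          add_le_add (norm_mul_le _ _) (norm_mul_le _ _)
      _ ≤ r ^ (k + 1) * ‖a - b‖ + ((k + 1 : ℝ) * r ^ k * ‖a - b‖) * r := by
          apply add_le_add
          · exact mul_le_mul_of_nonneg_right (aux_norm_pow_le ha (k + 1) (by omega))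
              (norm_nonneg _)
          · exact mul_le_mul ih hb (norm_nonneg _) (by positivity)
      _ = (k + 1 + 1 : ℝ) * r ^ (k + 1) * ‖a - b‖ := by ring
      _ = ((k + 1 : ℕ) + 1 : ℝ) * r ^ (k + 1) * ‖a - b‖ := by push_cast; ring

/-- Numeric bound: `n (1/4)^(n-1) ≤ (√2)^(1-n)`. -/
lemma aux_numeric (n : ℕ) (hn : 1 ≤ n) :
    (n : ℝ) * (1 / 4 : ℝ) ^ (n - 1) ≤ Real.sqrt 2 ^ ((1 : ℤ) - (n : ℤ)) := by
  obtain ⟨k, rfl⟩ : ∃ k, n = k + 1 := ⟨n - 1, by omega⟩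
  have h2 : (0 : ℝ) < Real.sqrt 2 := Real.sqrt_pos.mpr (by norm_num)
  have hz : ((1 : ℤ) - ((k + 1 : ℕ) : ℤ)) = -(k : ℤ) := by push_cast; ring
  rw [hz, zpow_neg, zpow_natCast, ← inv_pow]
  have hsub : (k + 1 : ℕ) - 1 = k := by omega
  rw [hsub]
  have hk2 : (k + 1 : ℝ) ≤ 2 ^ k := by
    have := Nat.lt_two_pow_self (n := k)
    have : (k + 1 : ℕ) ≤ 2 ^ k := this
    exact_mod_cast this
  have step1 : ((k + 1 : ℕ) : ℝ) * (1 / 4 : ℝ) ^ k ≤ (1 / 2 : ℝ) ^ k := by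
    calc ((k + 1 : ℕ) : ℝ) * (1 / 4 : ℝ) ^ k ≤ 2 ^ k * (1 / 4 : ℝ) ^ k := by
          apply mul_le_mul_of_nonneg_right _ (by positivity)
          push_cast; exact hk2
      _ = (1 / 2 : ℝ) ^ k := by rw [← mul_pow]; norm_num
  refine step1.trans (pow_le_pow_left₀ (by norm_num) ?_ k)
  rw [le_inv_comm₀ (by norm_num) h2]
  nlinarith [Real.sq_sqrt (by norm_num : (2:ℝ) ≥ 0), Real.sqrt_nonneg 2]

set_option maxHeartbeats 1000000 in
/-- The inductive power bound from the proof of Lemma 2.10: if `‖A(x)‖ ≤ 1/4` on `Ω`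
and `A` has finite Gagliardo `H^{1/2}(Ω)` seminorm, then for every `n ≥ 1`,
`[Aⁿ]_{1/2} ≤ (√2)^{1−n} [A]_{1/2}`. -/
theorem pow_gagliardo_bound (d m : ℕ) (Ω : Set (EuclideanSpace ℝ (Fin d)))
    (A : EuclideanSpace ℝ (Fin d) → Matrix (Fin m) (Fin m) ℝ)
    (hA : AEStronglyMeasurable A (volume.restrict Ω))
    (hA_bound : ∀ x ∈ Ω, ‖A x‖ ≤ 1 / 4)
    (hA_gag : IntegrableOn
      (fun p : EuclideanSpace ℝ (Fin d) × EuclideanSpace ℝ (Fin d) =>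
        ‖A p.1 - A p.2‖ ^ 2 / ‖p.1 - p.2‖ ^ (d + 1)) (Ω ×ˢ Ω))
    (n : ℕ) (hn : 1 ≤ n) :
    gagliardoSeminorm d Ω (fun x => A x ^ n) ≤
      Real.sqrt 2 ^ ((1 : ℤ) - (n : ℤ)) * gagliardoSeminorm d Ω A := by
  classical
  set C : ℝ := Real.sqrt 2 ^ ((1 : ℤ) - (n : ℤ)) with hC_def
  have hCpos : 0 < C := zpow_pos (Real.sqrt_pos.mpr (by norm_num)) _
  set ρ : Measure (EuclideanSpace ℝ (Fin d) × EuclideanSpace ℝ (Fin d)) := (volume : Measure (EuclideanSpace ℝ (Fin d) × EuclideanSpace ℝ (Fin d))).restrict (Ω ×ˢ Ω) with hρ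
  -- measurable version of A
  set A' := hA.mk A with hA'def
  have hA'meas : StronglyMeasurable A' := hA.stronglyMeasurable_mk
  have hAA' : A =ᵐ[volume.restrict Ω] A' := hA.ae_eq_mk
  -- null sets
  set N : Set (EuclideanSpace ℝ (Fin d)) := toMeasurable (volume.restrict Ω) {x | A x ≠ A' x} with hNdef
  have hNmeas : MeasurableSet N := measurableSet_toMeasurable _ _
  have hNnull : (volume.restrict Ω) N = 0 := by
    rw [measure_toMeasurable]
    exact hAA'
  have hNsub : {x | A x ≠ A' x} ⊆ N := subset_toMeasurable _ _
  set T : Set (EuclideanSpace ℝ (Fin d)) := {x | ¬ ‖A' x‖ ≤ 1 / 4} \ N with hTdef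
  have hTmeas : MeasurableSet T := by
    have : MeasurableSet {x | ¬ ‖A' x‖ ≤ 1 / 4} := by
      have h1 : Measurable fun x => ‖A' x‖ := hA'meas.norm.measurable
      exact (measurableSet_le h1 measurable_const).compl
    exact this.diff hNmeas
  set S : Set (EuclideanSpace ℝ (Fin d)) := T ∪ N with hSdef
  have hSmeas : MeasurableSet S := hTmeas.union hNmeas
  have hSnull : volume (S ∩ Ω) = 0 := by
    have hT : T ∩ Ω = ∅ := by
      ext x
      simp only [Set.mem_inter_iff, Set.mem_empty_iff_false, iff_false, not_and, hTdef,
        Set.mem_diff, Set.mem_setOf_eq]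
      rintro ⟨hx1, hx2⟩ hxΩ
      apply hx1
      have : A x = A' x := by
        by_contra h
        exact hx2 (hNsub h)
      rw [← this]
      exact hA_bound x hxΩ
    have hTnull : volume (T ∩ Ω) = 0 := by rw [hT]; simp
    have hNnull' : volume (N ∩ Ω) = 0 := by
      rw [← Measure.restrict_apply hNmeas]; exact hNnull
    have : S ∩ Ω = (T ∩ Ω) ∪ (N ∩ Ω) := by
      rw [hSdef, Set.union_inter_distrib_right]
    rw [this]
    exact measure_union_null hTnull hNnull'
  -- the bad set in the product is null
  have hprod1 : ρ (S ×ˢ (Set.univ : Set (EuclideanSpace ℝ (Fin d)))) = 0 := by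
    rw [hρ, Measure.restrict_apply (hSmeas.prod MeasurableSet.univ)]
    have hsub : (S ×ˢ (Set.univ : Set (EuclideanSpace ℝ (Fin d)))) ∩ (Ω ×ˢ Ω)
        ⊆ (toMeasurable volume (S ∩ Ω)) ×ˢ (Set.univ : Set (EuclideanSpace ℝ (Fin d))) := by
      rintro ⟨x, y⟩ ⟨⟨hx, -⟩, hxΩ, -⟩
      exact ⟨subset_toMeasurable _ _ ⟨hx, hxΩ⟩, trivial⟩
    refine measure_mono_null hsub ?_
    rw [Measure.volume_eq_prod, Measure.prod_prod, measure_toMeasurable, hSnull, zero_mul]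
  have hprod2 : ρ ((Set.univ : Set (EuclideanSpace ℝ (Fin d))) ×ˢ S) = 0 := by
    rw [hρ, Measure.restrict_apply (MeasurableSet.univ.prod hSmeas)]
    have hsub : ((Set.univ : Set (EuclideanSpace ℝ (Fin d))) ×ˢ S) ∩ (Ω ×ˢ Ω)
        ⊆ (Set.univ : Set (EuclideanSpace ℝ (Fin d))) ×ˢ (toMeasurable volume (S ∩ Ω)) := by
      rintro ⟨x, y⟩ ⟨⟨-, hy⟩, -, hyΩ⟩
      exact ⟨trivial, subset_toMeasurable _ _ ⟨hy, hyΩ⟩⟩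
    refine measure_mono_null hsub ?_
    rw [Measure.volume_eq_prod, Measure.prod_prod, measure_toMeasurable, hSnull, mul_zero]
  have hae : ∀ᵐ p ∂ρ, p.1 ∉ S ∧ p.2 ∉ S := by
    rw [MeasureTheory.ae_iff]
    refine measure_mono_null (fun p hp => ?_) (by
      refine measure_union_null hprod1 hprod2)
    simp only [Set.mem_setOf_eq, not_and, not_not] at hp
    by_cases h1 : p.1 ∈ S
    · exact Set.mem_union_left _ ⟨h1, trivial⟩
    · exact Set.mem_union_right _ ⟨trivial, hp h1⟩
  -- good points: A = A' and ‖A'‖ ≤ 1/4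
  have hgood : ∀ x : EuclideanSpace ℝ (Fin d), x ∉ S → A x = A' x ∧ ‖A' x‖ ≤ 1 / 4 := by
    intro x hx
    have hxN : x ∉ N := fun h => hx (Set.mem_union_right _ h)
    have hxT : x ∉ T := fun h => hx (Set.mem_union_left _ h)
    have heq : A x = A' x := by
      by_contra h
      exact hxN (hNsub h)
    refine ⟨heq, ?_⟩
    by_contra h
    exact hxT ⟨h, hxN⟩
  -- the two integrands, measurable versions
  set f : EuclideanSpace ℝ (Fin d) × EuclideanSpace ℝ (Fin d) → ℝ := fun p => ‖A p.1 - A p.2‖ ^ 2 / ‖p.1 - p.2‖ ^ (d + 1) with hf_def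
  set g : EuclideanSpace ℝ (Fin d) × EuclideanSpace ℝ (Fin d) → ℝ := fun p => ‖A p.1 ^ n - A p.2 ^ n‖ ^ 2 / ‖p.1 - p.2‖ ^ (d + 1) with hg_def
  set f' : EuclideanSpace ℝ (Fin d) × EuclideanSpace ℝ (Fin d) → ℝ := fun p => ‖A' p.1 - A' p.2‖ ^ 2 / ‖p.1 - p.2‖ ^ (d + 1) with hf'_def
  set g' : EuclideanSpace ℝ (Fin d) × EuclideanSpace ℝ (Fin d) → ℝ := fun p => ‖A' p.1 ^ n - A' p.2 ^ n‖ ^ 2 / ‖p.1 - p.2‖ ^ (d + 1)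
    with hg'_def
  have hff' : f =ᵐ[ρ] f' := by
    filter_upwards [hae] with p hp
    rw [hf_def, hf'_def]
    simp only [(hgood p.1 hp.1).1, (hgood p.2 hp.2).1]
  have hgg' : g =ᵐ[ρ] g' := by
    filter_upwards [hae] with p hp
    rw [hg_def, hg'_def]
    simp only [(hgood p.1 hp.1).1, (hgood p.2 hp.2).1]
  have hf'int : Integrable f' ρ := hA_gag.congr hff'
  -- pointwise bound
  have hbound : ∀ᵐ p ∂ρ, g' p ≤ C ^ 2 * f' p := by
    filter_upwards [hae] with p hp
    have h1 := (hgood p.1 hp.1).2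
    have h2 := (hgood p.2 hp.2).2
    have key : ‖A' p.1 ^ n - A' p.2 ^ n‖ ≤ C * ‖A' p.1 - A' p.2‖ := by
      obtain ⟨k, rfl⟩ : ∃ k, n = k + 1 := ⟨n - 1, by omega⟩
      calc ‖A' p.1 ^ (k + 1) - A' p.2 ^ (k + 1)‖
          ≤ (k + 1 : ℝ) * (1 / 4 : ℝ) ^ k * ‖A' p.1 - A' p.2‖ :=
            aux_pow_sub_pow h1 h2 k
        _ ≤ C * ‖A' p.1 - A' p.2‖ := by
            apply mul_le_mul_of_nonneg_right _ (norm_nonneg _)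
            have h := aux_numeric (k + 1) (by omega)
            rw [Nat.add_sub_cancel] at h
            rw [hC_def]
            push_cast at h ⊢
            exact h
    have hsq : ‖A' p.1 ^ n - A' p.2 ^ n‖ ^ 2 ≤ C ^ 2 * ‖A' p.1 - A' p.2‖ ^ 2 := by
      rw [← mul_pow]
      exact pow_le_pow_left₀ (norm_nonneg _) key 2
    rw [hg'_def, hf'_def]
    simp only []
    rcases eq_or_lt_of_le (by positivity : (0:ℝ) ≤ ‖p.1 - p.2‖ ^ (d + 1)) with hw | hw
    · rw [← hw, div_zero, div_zero, mul_zero]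
    · rw [← mul_div_assoc]
      gcongr
  -- measurability of g'
  have hg'meas : AEStronglyMeasurable g' ρ := by
    have s1 : StronglyMeasurable fun p : EuclideanSpace ℝ (Fin d) × EuclideanSpace ℝ (Fin d) =>
        A' p.1 ^ n := (continuous_pow n).comp_stronglyMeasurable
          (hA'meas.comp_measurable measurable_fst)
    have s2 : StronglyMeasurable fun p : EuclideanSpace ℝ (Fin d) × EuclideanSpace ℝ (Fin d) =>
        A' p.2 ^ n := (continuous_pow n).comp_stronglyMeasurable
          (hA'meas.comp_measurable measurable_snd)
    have h1 : StronglyMeasurable fun p : EuclideanSpace ℝ (Fin d) × EuclideanSpace ℝ (Fin d) =>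
        ‖A' p.1 ^ n - A' p.2 ^ n‖ ^ 2 := ((s1.sub s2).norm).pow 2
    have h2 : StronglyMeasurable fun p : EuclideanSpace ℝ (Fin d) × EuclideanSpace ℝ (Fin d) => ‖p.1 - p.2‖ ^ (d + 1) := by
      apply Continuous.stronglyMeasurable; fun_prop
    exact (h1.measurable.div h2.measurable).stronglyMeasurable.aestronglyMeasurable
  have hg'int : Integrable g' ρ := by
    refine Integrable.mono' (hf'int.const_mul (C ^ 2)) hg'meas ?_
    filter_upwards [hbound] with p hp
    rw [Real.norm_of_nonneg (by rw [hg'_def]; positivity)]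
    exact hp
  -- put the integrals together
  have hint : (∫ p, g p ∂ρ) ≤ C ^ 2 * ∫ p, f p ∂ρ := by
    calc (∫ p, g p ∂ρ) = ∫ p, g' p ∂ρ := integral_congr_ae hgg'
      _ ≤ ∫ p, C ^ 2 * f' p ∂ρ :=
          integral_mono_ae hg'int (hf'int.const_mul _) hbound
      _ = C ^ 2 * ∫ p, f' p ∂ρ := integral_const_mul _ _
      _ = C ^ 2 * ∫ p, f p ∂ρ := by rw [integral_congr_ae hff'.symm]
  have hfnonneg : 0 ≤ ∫ p, f p ∂ρ := by
    apply integral_nonneg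
    intro p
    rw [hf_def]; positivity
  -- conclude with square roots
  have : gagliardoSeminorm d Ω (fun x => A x ^ n) = Real.sqrt (∫ p, g p ∂ρ) := rfl
  rw [this]
  have hrhs : gagliardoSeminorm d Ω A = Real.sqrt (∫ p, f p ∂ρ) := rfl
  rw [hrhs]
  calc Real.sqrt (∫ p, g p ∂ρ) ≤ Real.sqrt (C ^ 2 * ∫ p, f p ∂ρ) := Real.sqrt_le_sqrt hint
    _ = C * Real.sqrt (∫ p, f p ∂ρ) := by
        rw [Real.sqrt_mul (sq_nonneg C), Real.sqrt_sq hCpos.le]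
end
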